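/- arXiv:1409.0139 — 2 statements merged into one kernel-verified Lean document; each statement's English description precedes it below -/
import Mathlib

section
/- With σ and ξ as above, for every continuous function F on [0, L) and every x ∈ [0, L): ∫₀^{σ(x)} F(ξ(t)) dt = ∫₀^x F(t)·(1 + w(t)²) dt + ∫_{[0,x)} F dυ. -/
open MeasureTheory Set
open scoped ENNReal NNReal

/-!
Put `m := (1 + w²) dt + υ`. Then `σ y = m [0, y)` is the left-continuous distribution function of
`m` on `[0, L)`, and `ξ` is its generalized inverse: for `0 ≤ s < σ x` and `y ∈ [0, x]` we have
`y ≤ ξ s ↔ σ y ≤ s`, the forward implication being continuity of `m` from below. Consequently `ξ`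
pushes Lebesgue measure on `[0, σ x)` forward to `m` restricted to `[0, x)`, and the substitution
formula is the integral of `F` against both sides.
-/

theorem withDensity_ofReal_apply_Ico {f : ℝ → ℝ} {a b : ℝ} (hab : a ≤ b)
    (hf : IntegrableOn f (Ioc a b)) (hf0 : 0 ≤ f) :
    volume.withDensity (fun t => ENNReal.ofReal (f t)) (Ico a b) =
      ENNReal.ofReal (∫ t in a..b, f t) := by
  rw [withDensity_apply _ measurableSet_Ico, setLIntegral_congr Ico_ae_eq_Ioc,
    intervalIntegral.integral_of_le hab, ofReal_integral_eq_lintegral_ofReal hf (ae_of_all _ hf0)]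

theorem setIntegral_Ico_withDensity_ofReal_add {F f : ℝ → ℝ} {υ : Measure ℝ} {a b : ℝ}
    (hab : a ≤ b) (hF : ContinuousOn F (Icc a b)) (hf : IntegrableOn f (Ioc a b)) (hf0 : 0 ≤ f)
    (hυ : υ (Ico a b) ≠ ∞) :
    ∫ t in Ico a b, F t ∂(volume.withDensity (fun t => ENNReal.ofReal (f t)) + υ) =
      (∫ t in a..b, F t * f t) + ∫ t in Ico a b, F t ∂υ := by
  have hFυ : IntegrableOn F (Ico a b) υ :=
    hF.integrableOn_of_subset_isCompact isCompact_Icc measurableSet_Ico Ico_subset_Icc_self hυ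
  have hFf : IntegrableOn F (Ico a b) (volume.withDensity fun t => ENNReal.ofReal (f t)) := by
    refine hF.integrableOn_of_subset_isCompact isCompact_Icc measurableSet_Ico
      Ico_subset_Icc_self ?_
    rw [withDensity_ofReal_apply_Ico hab hf hf0]
    exact ENNReal.ofReal_ne_top
  have hf_meas : AEMeasurable (fun t => ENNReal.ofReal (f t)) (volume.restrict (Ico a b)) :=
    (hf.congr_set_ae Ico_ae_eq_Ioc).aemeasurable.ennreal_ofReal
  rw [Measure.restrict_add, integral_add_measure hFf hFυ,
    setIntegral_withDensity_eq_setIntegral_toReal_smul₀ hf_meas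
      (ae_of_all _ fun _ => ENNReal.ofReal_lt_top) _ measurableSet_Ico,
    intervalIntegral.integral_of_le hab, ← integral_Ico_eq_integral_Ioc]
  congr 1
  refine setIntegral_congr_fun measurableSet_Ico fun t _ => ?_
  rw [ENNReal.toReal_ofReal (hf0 t), smul_eq_mul, mul_comm]

theorem withDensity_one_add_sq_add_apply_Ico {w : ℝ → ℝ} {υ : Measure ℝ} {z : ℝ} (hz : 0 ≤ z)
    (hw : IntegrableOn (fun t => w t ^ 2) (Ioc 0 z)) (hυ : υ (Ico 0 z) ≠ ∞) :
    (volume.withDensity (fun t => ENNReal.ofReal (1 + w t ^ 2)) + υ) (Ico 0 z) =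
      ENNReal.ofReal (z + (∫ t in (0:ℝ)..z, w t ^ 2) + (υ (Ico 0 z)).toReal) := by
  have hint : ∫ t in (0:ℝ)..z, (1 + w t ^ 2) = z + ∫ t in (0:ℝ)..z, w t ^ 2 := by
    rw [intervalIntegral.integral_add intervalIntegrable_const
      ((intervalIntegrable_iff_integrableOn_Ioc_of_le hz).2 hw)]
    simp
  have hw0 : 0 ≤ ∫ t in (0:ℝ)..z, w t ^ 2 :=
    intervalIntegral.integral_nonneg hz fun t _ => sq_nonneg (w t)
  rw [Measure.add_apply, withDensity_ofReal_apply_Ico (f := fun t => 1 + w t ^ 2) hz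
      ((integrableOn_const measure_Ioc_lt_top.ne).add hw) (fun t => by positivity),
    hint, ENNReal.ofReal_add (add_nonneg hz hw0) ENNReal.toReal_nonneg,
    ENNReal.ofReal_toReal hυ]

theorem apply_zero_nonpos_of_measure_Ico_eq_ofReal {m : Measure ℝ} {σ : ℝ → ℝ} {S : Set ℝ}
    (hσ : ∀ z ∈ S, m (Ico 0 z) = ENNReal.ofReal (σ z)) (h0 : (0 : ℝ) ∈ S) : σ 0 ≤ 0 :=
  ENNReal.ofReal_eq_zero.1 (by rw [← hσ 0 h0, Ico_self, measure_empty])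

theorem le_sSup_inter_preimage_Iic_iff {m : Measure ℝ} {σ : ℝ → ℝ} {S : Set ℝ}
    (hσ : ∀ z ∈ S, m (Ico 0 z) = ENNReal.ofReal (σ z)) (hσ_ge : ∀ z ∈ S, z ≤ σ z)
    {s y : ℝ} (hs : 0 ≤ s) (hy : 0 ≤ y) (hyS : Icc 0 y ⊆ S) :
    y ≤ sSup (S ∩ σ ⁻¹' Iic s) ↔ σ y ≤ s := by
  have hbdd : BddAbove (S ∩ σ ⁻¹' Iic s) := ⟨s, fun z hz => (hσ_ge z hz.1).trans hz.2⟩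
  refine ⟨fun hle => ?_, fun hσy => le_csSup hbdd ⟨hyS ⟨hy, le_rfl⟩, hσy⟩⟩
  have h0S : (0 : ℝ) ∈ S := hyS ⟨le_rfl, hy⟩
  have hσ0 : σ 0 ≤ 0 := apply_zero_nonpos_of_measure_Ico_eq_ofReal hσ h0S
  rcases hy.eq_or_lt with rfl | hy
  · exact hσ0.trans hs
  obtain ⟨u, hu_mono, hu_mem, hu_lim⟩ := exists_seq_strictMono_tendsto' hy
  have hIco : Ico 0 y = ⋃ n, Ico 0 (u n) := by
    refine Subset.antisymm (fun t ht => ?_)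
      (iUnion_subset fun n => Ico_subset_Ico_right (hu_mem n).2.le)
    obtain ⟨n, hn⟩ := (hu_lim.eventually (lt_mem_nhds ht.2)).exists
    exact mem_iUnion.2 ⟨n, ht.1, hn⟩
  have hu_le : ∀ n, m (Ico 0 (u n)) ≤ ENNReal.ofReal s := fun n => by
    obtain ⟨z, ⟨hzS, hσz⟩, hz⟩ := exists_lt_of_lt_csSup (s := S ∩ σ ⁻¹' Iic s)
      ⟨0, h0S, hσ0.trans hs⟩ ((hu_mem n).2.trans_le hle)
    calc m (Ico 0 (u n)) ≤ m (Ico 0 z) := measure_mono (Ico_subset_Ico_right hz.le)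
      _ = ENNReal.ofReal (σ z) := hσ z hzS
      _ ≤ ENNReal.ofReal s := ENNReal.ofReal_le_ofReal hσz
  have hIco_mono : Monotone fun n => Ico 0 (u n) :=
    fun _ _ hab => Ico_subset_Ico_right (hu_mono.monotone hab)
  rw [← ENNReal.ofReal_le_ofReal_iff hs, ← hσ y (hyS ⟨hy.le, le_rfl⟩), hIco,
    hIco_mono.measure_iUnion]
  exact iSup_le hu_le

theorem mapsTo_Ico_of_forall_le_iff {σ ξ : ℝ → ℝ} {x : ℝ} (hx : 0 ≤ x) (hσ0 : σ 0 ≤ 0)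
    (hξ : ∀ s ∈ Ico 0 (σ x), ∀ y ∈ Icc 0 x, y ≤ ξ s ↔ σ y ≤ s) :
    MapsTo ξ (Ico 0 (σ x)) (Ico 0 x) := fun s hs =>
  ⟨(hξ s hs 0 ⟨le_rfl, hx⟩).2 (hσ0.trans hs.1),
    not_le.1 fun h => not_le.2 hs.2 ((hξ s hs x ⟨hx, le_rfl⟩).1 h)⟩

theorem aemeasurable_of_forall_le_iff {σ ξ : ℝ → ℝ} {x : ℝ} (hx : 0 ≤ x) (hσ0 : σ 0 ≤ 0)
    (hξ : ∀ s ∈ Ico 0 (σ x), ∀ y ∈ Icc 0 x, y ≤ ξ s ↔ σ y ≤ s) :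
    AEMeasurable ξ (volume.restrict (Ico 0 (σ x))) := by
  have hmaps := mapsTo_Ico_of_forall_le_iff hx hσ0 hξ
  refine aemeasurable_restrict_of_monotoneOn measurableSet_Ico fun s hs _ hs' hss' => ?_
  have hξs : ξ s ∈ Icc 0 x := Ico_subset_Icc_self (hmaps hs)
  exact (hξ _ hs' _ hξs).2 (((hξ s hs _ hξs).1 le_rfl).trans hss')

theorem map_restrict_Ico_eq_restrict_Ico {m : Measure ℝ} {σ ξ : ℝ → ℝ} {x : ℝ} (hx : 0 ≤ x)
    (hσ : ∀ y ∈ Icc 0 x, m (Ico 0 y) = ENNReal.ofReal (σ y)) (hσ0 : ∀ y ∈ Icc 0 x, 0 ≤ σ y)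
    (hξ : ∀ s ∈ Ico 0 (σ x), ∀ y ∈ Icc 0 x, y ≤ ξ s ↔ σ y ≤ s) :
    (volume.restrict (Ico 0 (σ x))).map ξ = m.restrict (Ico 0 x) := by
  have hσ00 : σ 0 ≤ 0 := apply_zero_nonpos_of_measure_Ico_eq_ofReal hσ ⟨le_rfl, hx⟩
  have hmaps := mapsTo_Ico_of_forall_le_iff hx hσ00 hξ
  refine Measure.ext_of_Ici _ _ fun y => ?_
  -- both sides only see `Ici y` through `Ico 0 x`, where it agrees with `Ici y'`
  set y' := max 0 (min y x)
  have hy' : y' ∈ Icc 0 x := ⟨le_max_left _ _, max_le hx (min_le_right _ _)⟩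
  have hclamp : ∀ t ∈ Ico 0 x, y ≤ t ↔ y' ≤ t := fun t ht => by
    simp [y', ht.1, not_le.2 ht.2]
  have hpre : ξ ⁻¹' Ici y ∩ Ico 0 (σ x) = Ico (σ y') (σ x) := by
    ext s
    constructor
    · rintro ⟨hys, hs⟩
      exact ⟨(hξ s hs y' hy').1 ((hclamp _ (hmaps hs)).1 hys), hs.2⟩
    · intro hs
      have hs' : s ∈ Ico 0 (σ x) := ⟨(hσ0 y' hy').trans hs.1, hs.2⟩
      exact ⟨(hclamp _ (hmaps hs')).2 ((hξ s hs' y' hy').2 hs.1), hs'⟩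
  have hIci : Ici y ∩ Ico 0 x = Ico 0 x \ Ico 0 y' := by
    ext t
    simp only [mem_inter_iff, mem_Ici, Set.mem_sdiff, mem_Ico, not_and, not_lt]
    constructor
    · rintro ⟨hyt, ht⟩
      exact ⟨ht, fun _ => (hclamp t ht).1 hyt⟩
    · rintro ⟨ht, h⟩
      exact ⟨(hclamp t ht).2 (h ht.1), ht⟩
  have hy'_fin : m (Ico 0 y') ≠ ∞ := by
    rw [hσ y' hy']
    exact ENNReal.ofReal_ne_top
  rw [Measure.map_apply_of_aemeasurable (aemeasurable_of_forall_le_iff hx hσ00 hξ)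
      measurableSet_Ici, Measure.restrict_apply' measurableSet_Ico, hpre,
    Measure.restrict_apply measurableSet_Ici, hIci,
    measure_sdiff (Ico_subset_Ico_right hy'.2) measurableSet_Ico.nullMeasurableSet hy'_fin,
    hσ x ⟨hx, le_rfl⟩, hσ y' hy', Real.volume_Ico, ENNReal.ofReal_sub _ (hσ0 y' hy')]

theorem setIntegral_Ico_comp_eq {E : Type*} [NormedAddCommGroup E] [NormedSpace ℝ E]
    {m : Measure ℝ} {σ ξ : ℝ → ℝ} {F : ℝ → E} {x : ℝ} (hx : 0 ≤ x)
    (hσ : ∀ y ∈ Icc 0 x, m (Ico 0 y) = ENNReal.ofReal (σ y)) (hσ0 : ∀ y ∈ Icc 0 x, 0 ≤ σ y)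
    (hξ : ∀ s ∈ Ico 0 (σ x), ∀ y ∈ Icc 0 x, y ≤ ξ s ↔ σ y ≤ s)
    (hF : AEStronglyMeasurable F (m.restrict (Ico 0 x))) :
    ∫ s in Ico 0 (σ x), F (ξ s) = ∫ t in Ico 0 x, F t ∂m := by
  have hξ_meas := aemeasurable_of_forall_le_iff hx
    (apply_zero_nonpos_of_measure_Ico_eq_ofReal hσ ⟨le_rfl, hx⟩) hξ
  rw [← map_restrict_Ico_eq_restrict_Ico hx hσ hσ0 hξ] at hF ⊢
  exact (integral_map hξ_meas hF).symm

theorem stmt_8_general (L : ℝ≥0∞) (w : ℝ → ℝ) (υ : Measure ℝ)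
    (hw : ∀ x : ℝ, 0 ≤ x → ENNReal.ofReal x < L →
      IntegrableOn (fun t => w t ^ 2) (Set.Ioc 0 x) volume)
    (hυ : ∀ x : ℝ, 0 ≤ x → ENNReal.ofReal x < L → υ (Set.Ico 0 x) < ⊤)
    (σ ξ : ℝ → ℝ)
    (hσ : ∀ x : ℝ, σ x = x + (∫ t in (0:ℝ)..x, w t ^ 2) + (υ (Set.Ico 0 x)).toReal)
    (hξ : ∀ s : ℝ, ξ s = sSup {x : ℝ | 0 ≤ x ∧ ENNReal.ofReal x < L ∧ σ x ≤ s}) :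
    ∀ F : ℝ → ℝ, ContinuousOn F {t : ℝ | 0 ≤ t ∧ ENNReal.ofReal t < L} →
      ∀ x : ℝ, 0 ≤ x → ENNReal.ofReal x < L →
        ∫ t in (0:ℝ)..(σ x), F (ξ t) =
          (∫ t in (0:ℝ)..x, F t * (1 + w t ^ 2)) + ∫ t in Set.Ico 0 x, F t ∂υ := by
  intro F hF x hx hxL
  set S := {z : ℝ | 0 ≤ z ∧ ENNReal.ofReal z < L}
  set m := volume.withDensity (fun t => ENNReal.ofReal (1 + w t ^ 2)) + υ
  have hIccS : Icc 0 x ⊆ S := fun t ht => ⟨ht.1, (ENNReal.ofReal_le_ofReal ht.2).trans_lt hxL⟩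
  have hmσ : ∀ z ∈ S, m (Ico 0 z) = ENNReal.ofReal (σ z) := fun z hz => by
    rw [hσ z]
    exact withDensity_one_add_sq_add_apply_Ico hz.1 (hw z hz.1 hz.2) (hυ z hz.1 hz.2).ne
  have hσ_ge : ∀ z ∈ S, z ≤ σ z := fun z hz => by
    have := intervalIntegral.integral_nonneg (μ := volume) hz.1 fun t _ => sq_nonneg (w t)
    linarith [hσ z, ENNReal.toReal_nonneg (a := υ (Ico 0 z))]
  have hξ' : ∀ s ∈ Ico 0 (σ x), ∀ y ∈ Icc 0 x, y ≤ ξ s ↔ σ y ≤ s := fun s hs y hy => by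
    rw [hξ, show {z | 0 ≤ z ∧ ENNReal.ofReal z < L ∧ σ z ≤ s} = S ∩ σ ⁻¹' Iic s from
      ext fun _ => and_assoc.symm]
    exact le_sSup_inter_preimage_Iic_iff hmσ hσ_ge hs.1 hy.1
      ((Icc_subset_Icc_right hy.2).trans hIccS)
  calc ∫ t in (0:ℝ)..(σ x), F (ξ t) = ∫ t in Ico 0 (σ x), F (ξ t) := by
        rw [intervalIntegral.integral_of_le (hx.trans (hσ_ge x (hIccS ⟨hx, le_rfl⟩))),
          integral_Ico_eq_integral_Ioc]
    _ = ∫ t in Ico 0 x, F t ∂m :=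
        setIntegral_Ico_comp_eq hx (fun y hy => hmσ y (hIccS hy))
          (fun y hy => hy.1.trans (hσ_ge y (hIccS hy))) hξ'
          ((hF.mono (Ico_subset_Icc_self.trans hIccS)).aestronglyMeasurable measurableSet_Ico)
    _ = _ :=
        setIntegral_Ico_withDensity_ofReal_add hx (hF.mono hIccS)
          ((integrableOn_const measure_Ioc_lt_top.ne).add (hw x hx hxL)) (fun t => by positivity)
          (hυ x hx hxL).ne

/-- Substitution formula for the generalized inverse `ξ` of
`σ(x) = x + ∫₀^x w² + υ([0,x))`: for every continuous `F` on `[0,L)` and `x ∈ [0,L)`,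
`∫₀^{σ(x)} F(ξ(t)) dt = ∫₀^x F(t)(1 + w(t)²) dt + ∫_{[0,x)} F dυ`. -/
theorem stmt_8 (L : ℝ≥0∞) (hL : 0 < L) (w : ℝ → ℝ) (υ : Measure ℝ)
    (hw : ∀ x : ℝ, 0 ≤ x → ENNReal.ofReal x < L →
      IntegrableOn (fun t => w t ^ 2) (Set.Ioc 0 x) volume)
    (hυ : ∀ x : ℝ, 0 ≤ x → ENNReal.ofReal x < L → υ (Set.Ico 0 x) < ⊤)
    (σ ξ : ℝ → ℝ)
    (hσ : ∀ x : ℝ, σ x = x + (∫ t in (0:ℝ)..x, w t ^ 2) + (υ (Set.Ico 0 x)).toReal)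
    (hξ : ∀ s : ℝ, ξ s = sSup {x : ℝ | 0 ≤ x ∧ ENNReal.ofReal x < L ∧ σ x ≤ s}) :
    ∀ F : ℝ → ℝ, ContinuousOn F {t : ℝ | 0 ≤ t ∧ ENNReal.ofReal t < L} →
      ∀ x : ℝ, 0 ≤ x → ENNReal.ofReal x < L →
        ∫ t in (0:ℝ)..(σ x), F (ξ t) =
          (∫ t in (0:ℝ)..x, F t * (1 + w t ^ 2)) + ∫ t in Set.Ico 0 x, F t ∂υ :=
  stmt_8_general L w υ hw hυ σ ξ hσ hξ
end

section
/- With ξ, σ, w as above, define for almost every s ∈ [0, ∞) the 2×2 matrix H(s) with entries H₁₁(s) = 1 − ξ'(s), H₁₂(s) = H₂₁(s) = ξ'(s)·w(ξ(s)), H₂₂(s) = ξ'(s). Then H(s) is symmetric, has trace 1, and is positive semidefinite for almost all s ∈ [0, ∞). -/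
open MeasureTheory Set Matrix
open scoped ENNReal NNReal

/-!
Write `G x = x + ∫₀^x w²`, so that `σ = G + υ([0, ·))` with a nondecreasing second summand.
For `s ≤ t`, every `y` with `ξ s < y < ξ t` has `σ y > s`, while `σ ≤ t` at points arbitrarily
close to `ξ t`; by continuity of `G` this gives `G (ξ t) - G (ξ s) ≤ t - s`. Where `ξ' (s) > 0`
and `G` has derivative `1 + w²` at `ξ s` (Lebesgue differentiation), the chain rule turns this
into `ξ' (1 + w(ξ)²) ≤ 1`, which together with `ξ' ≥ 0` is exactly `det H ≥ 0` and `H₁₁ ≥ 0`.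
The remaining points are null: by the one-dimensional change of variables, a monotone function
cannot map a non-null set on which its derivative is positive into a null set.
-/

open Filter Topology

theorem Monotone.lt_of_deriv_pos {f : ℝ → ℝ} (hf : Monotone f) {a b : ℝ}
    (ha : 0 < deriv f a) (hab : a < b) : f a < f b := by
  refine (hf hab.le).lt_of_ne fun heq => ha.ne' ?_
  have hconst : EqOn (fun _ => f a) f (Icc a b) := fun x hx =>
    le_antisymm (hf hx.1) (heq ▸ hf hx.2)
  exact (uniqueDiffOn_Icc hab a (left_mem_Icc.2 hab.le)).eq_deriv _
    (differentiableAt_of_deriv_ne_zero ha.ne').hasDerivAt.hasDerivWithinAt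
    ((hasDerivWithinAt_const a _ (f a)).congr hconst.symm rfl)

theorem Monotone.ae_deriv_pos_imp_notMem {f : ℝ → ℝ} (hf : Monotone f) {N : Set ℝ}
    (hN : volume N = 0) : ∀ᵐ x, 0 < deriv f x → f x ∉ N := by
  obtain ⟨N', hNN', hN'm, hN'0⟩ := exists_measurable_superset_of_null hN
  set B := {x | 0 < deriv f x} ∩ f ⁻¹' N'
  have hBm : MeasurableSet B :=
    (measurableSet_lt measurable_const (measurable_deriv f)).inter (hf.measurable hN'm)
  have hint : ∫⁻ x in B, ENNReal.ofReal (deriv f x) = 0 := by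
    rw [lintegral_deriv_eq_volume_image_of_monotoneOn hBm (fun x hx =>
      (differentiableAt_of_deriv_ne_zero hx.1.ne').hasDerivAt.hasDerivWithinAt) (hf.monotoneOn B)]
    exact measure_mono_null (image_subset_iff.2 fun x hx => hx.2) hN'0
  filter_upwards [(setLIntegral_eq_zero_iff hBm (measurable_deriv f).ennreal_ofReal).1 hint]
    with x hx hd hxN
  exact (ENNReal.ofReal_pos.2 hd).ne' (hx ⟨hd, hNN' hxN⟩)

theorem HasDerivAt.le_one_of_eventually_sub_le {g : ℝ → ℝ} {d s : ℝ} (hg : HasDerivAt g d s)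
    (h : ∀ᶠ t in 𝓝[>] s, g t - g s ≤ t - s) : d ≤ 1 := by
  refine le_of_tendsto (hg.tendsto_slope.mono_left (nhdsGT_le_nhdsNE s)) ?_
  filter_upwards [h, self_mem_nhdsWithin] with t ht (hst : s < t)
  rw [slope_def_field]
  exact div_le_one_of_le₀ ht (sub_nonneg.2 hst.le)

theorem ContinuousOn.sub_le_of_forall_Ioo {G : ℝ → ℝ} {a b C : ℝ} (hab : a < b)
    (hG : ContinuousOn G (Icc a b)) (h : ∀ y x, a < y → y < x → x < b → G x - G y ≤ C) :
    G b - G a ≤ C := by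
  set δ := (b - a) / 2 with hδ_def
  have hδ : 0 < δ := by positivity
  have hcont : ContinuousOn (fun u => G (b - u) - G (a + u)) (Icc 0 δ) := by
    refine (hG.comp (by fun_prop) fun u hu => ?_).sub (hG.comp (by fun_prop) fun u hu => ?_) <;>
      constructor <;> linarith [hu.1, hu.2, hδ_def]
  have := ContinuousWithinAt.closure_le (s := Ioo 0 δ) (g := fun _ => C)
    (by rw [closure_Ioo hδ.ne]; exact left_mem_Icc.2 hδ.le)
    ((hcont 0 (left_mem_Icc.2 hδ.le)).mono Ioo_subset_Icc_self) continuousWithinAt_const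
    fun u hu => h _ _ (by linarith [hu.1]) (by linarith [hu.2, hδ_def]) (by linarith [hu.1])
  simpa using this

noncomputable def genInv (L : ℝ≥0∞) (σ : ℝ → ℝ) (s : ℝ) : ℝ :=
  sSup {x : ℝ | 0 ≤ x ∧ ENNReal.ofReal x < L ∧ σ x ≤ s}

section GenInv

variable {L : ℝ≥0∞} {σ : ℝ → ℝ}

theorem genInv_nonneg (s : ℝ) : 0 ≤ genInv L σ s :=
  Real.sSup_nonneg fun _ hx => hx.1

theorem bddAbove_sublevel (hσ : ∀ x, 0 ≤ x → x ≤ σ x) (s : ℝ) :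
    BddAbove {x : ℝ | 0 ≤ x ∧ ENNReal.ofReal x < L ∧ σ x ≤ s} :=
  ⟨s, fun x hx => (hσ x hx.1).trans hx.2.2⟩

theorem le_genInv (hσ : ∀ x, 0 ≤ x → x ≤ σ x) {x s : ℝ} (hx0 : 0 ≤ x)
    (hxL : ENNReal.ofReal x < L) (hxs : σ x ≤ s) : x ≤ genInv L σ s :=
  le_csSup (bddAbove_sublevel hσ s) ⟨hx0, hxL, hxs⟩

theorem exists_gt_of_lt_genInv {a s : ℝ} (ha : 0 ≤ a) (h : a < genInv L σ s) :
    ∃ x, a < x ∧ 0 ≤ x ∧ ENNReal.ofReal x < L ∧ σ x ≤ s := by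
  rcases eq_empty_or_nonempty {x : ℝ | 0 ≤ x ∧ ENNReal.ofReal x < L ∧ σ x ≤ s} with he | hne
  · rw [genInv, he, Real.sSup_empty] at h
    exact absurd ha h.not_ge
  · obtain ⟨x, hx, hax⟩ := exists_lt_of_lt_csSup hne h
    exact ⟨x, hax, hx⟩

theorem genInv_mono (hσ : ∀ x, 0 ≤ x → x ≤ σ x) : Monotone (genInv L σ) := by
  intro s t hst
  rcases eq_empty_or_nonempty {x : ℝ | 0 ≤ x ∧ ENNReal.ofReal x < L ∧ σ x ≤ s} with he | hne
  · rw [genInv, he, Real.sSup_empty]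
    exact genInv_nonneg t
  · exact csSup_le_csSup (bddAbove_sublevel hσ t) hne fun x hx => ⟨hx.1, hx.2.1, hx.2.2.trans hst⟩

theorem ofReal_genInv_lt (hσ : ∀ x, 0 ≤ x → x ≤ σ x) {s : ℝ}
    (hd : 0 < deriv (genInv L σ) s) : ENNReal.ofReal (genInv L σ s) < L := by
  obtain ⟨x, hx, -, hxL, -⟩ :=
    exists_gt_of_lt_genInv (genInv_nonneg s) ((genInv_mono hσ).lt_of_deriv_pos hd (lt_add_one s))
  exact (ENNReal.ofReal_le_ofReal hx.le).trans_lt hxL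

theorem comp_genInv_sub_le {G : ℝ → ℝ} (hσ : ∀ x, 0 ≤ x → x ≤ σ x)
    (hG : ∀ x y, 0 ≤ x → x ≤ y → ENNReal.ofReal y < L → G x ≤ G y)
    (hσG : ∀ x y, 0 ≤ x → x ≤ y → ENNReal.ofReal y < L → G y - G x ≤ σ y - σ x)
    (hGc : ∀ b, 0 ≤ b → ENNReal.ofReal b < L → ContinuousOn G (Icc 0 b))
    {s t : ℝ} (hst : s ≤ t) (htL : ENNReal.ofReal (genInv L σ t) < L) :
    G (genInv L σ t) - G (genInv L σ s) ≤ t - s := by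
  rcases (genInv_mono hσ hst).eq_or_lt with hab | hab
  · rw [hab, sub_self]
    linarith
  have hGab : ContinuousOn G (Icc (genInv L σ s) (genInv L σ t)) :=
    (hGc _ (genInv_nonneg t) htL).mono (Icc_subset_Icc_left (genInv_nonneg s))
  refine hGab.sub_le_of_forall_Ioo hab fun y x hay hyx hxb => ?_
  have hy0 : 0 ≤ y := (genInv_nonneg s).trans hay.le
  obtain ⟨x', hxx', -, hx'L, hx't⟩ := exists_gt_of_lt_genInv (hy0.trans hyx.le) hxb
  have hxL : ENNReal.ofReal x < L := (ENNReal.ofReal_le_ofReal hxx'.le).trans_lt hx'L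
  have hyL : ENNReal.ofReal y < L := (ENNReal.ofReal_le_ofReal hyx.le).trans_lt hxL
  have hsy : s < σ y := lt_of_not_ge fun hys => hay.not_ge (le_genInv hσ hy0 hyL hys)
  have hxt : σ x ≤ t := by
    linarith [hσG x x' (hy0.trans hyx.le) hxx'.le hx'L, hG x x' (hy0.trans hyx.le) hxx'.le hx'L]
  linarith [hσG y x hy0 hyx.le hxL]

theorem deriv_genInv_mul_le_one {G : ℝ → ℝ} (hσ : ∀ x, 0 ≤ x → x ≤ σ x)
    (hG : ∀ x y, 0 ≤ x → x ≤ y → ENNReal.ofReal y < L → G x ≤ G y)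
    (hσG : ∀ x y, 0 ≤ x → x ≤ y → ENNReal.ofReal y < L → G y - G x ≤ σ y - σ x)
    (hGc : ∀ b, 0 ≤ b → ENNReal.ofReal b < L → ContinuousOn G (Icc 0 b))
    {s g' : ℝ} (hd : 0 < deriv (genInv L σ) s) (hGd : HasDerivAt G g' (genInv L σ s)) :
    deriv (genInv L σ) s * g' ≤ 1 := by
  have hξd := (differentiableAt_of_deriv_ne_zero hd.ne').hasDerivAt
  obtain ⟨c, -, hc, hcL⟩ := ENNReal.lt_iff_exists_real_btwn.1 (ofReal_genInv_lt hσ hd)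
  have hev : ∀ᶠ t in 𝓝 s, genInv L σ t < c :=
    hξd.continuousAt.eventually (eventually_lt_nhds (ENNReal.ofReal_lt_ofReal_iff'.1 hc).1)
  rw [mul_comm]
  refine (hGd.comp s hξd).le_one_of_eventually_sub_le ?_
  filter_upwards [nhdsWithin_le_nhds hev, self_mem_nhdsWithin] with t ht (hst : s < t)
  exact comp_genInv_sub_le hσ hG hσG hGc hst.le ((ENNReal.ofReal_le_ofReal ht.le).trans_lt hcL)

end GenInv

section Primitive

variable {L : ℝ≥0∞} {f : ℝ → ℝ}

theorem intervalIntegrable_zero_of_integrableOn_Ioc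
    (hf : ∀ x, 0 ≤ x → ENNReal.ofReal x < L → IntegrableOn f (Ioc 0 x)) {b : ℝ} (hb : 0 ≤ b)
    (hbL : ENNReal.ofReal b < L) : IntervalIntegrable f volume 0 b :=
  (intervalIntegrable_iff_integrableOn_Ioc_of_le hb).2 (hf b hb hbL)

theorem add_intervalIntegral_mono
    (hf : ∀ x, 0 ≤ x → ENNReal.ofReal x < L → IntegrableOn f (Ioc 0 x)) (hf0 : ∀ t, 0 ≤ f t)
    (x y : ℝ) (hx : 0 ≤ x) (hxy : x ≤ y) (hyL : ENNReal.ofReal y < L) :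
    x + ∫ t in (0:ℝ)..x, f t ≤ y + ∫ t in (0:ℝ)..y, f t :=
  add_le_add hxy <| intervalIntegral.integral_mono_interval le_rfl hx hxy
    (ae_of_all _ hf0) (intervalIntegrable_zero_of_integrableOn_Ioc hf (hx.trans hxy) hyL)

theorem continuousOn_add_intervalIntegral
    (hf : ∀ x, 0 ≤ x → ENNReal.ofReal x < L → IntegrableOn f (Ioc 0 x)) (b : ℝ) (hb : 0 ≤ b)
    (hbL : ENNReal.ofReal b < L) :
    ContinuousOn (fun x => x + ∫ t in (0:ℝ)..x, f t) (Icc 0 b) := by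
  have := intervalIntegral.continuousOn_primitive_interval'
    (intervalIntegrable_zero_of_integrableOn_Ioc hf hb hbL) left_mem_uIcc
  rw [uIcc_of_le hb] at this
  exact continuousOn_id.add this

theorem ae_hasDerivAt_add_intervalIntegral
    (hf : ∀ x, 0 ≤ x → ENNReal.ofReal x < L → IntegrableOn f (Ioc 0 x)) :
    ∀ᵐ x, 0 ≤ x → ENNReal.ofReal x < L →
      HasDerivAt (fun x => x + ∫ t in (0:ℝ)..x, f t) (1 + f x) x := by
  have hrat : ∀ᵐ x, ∀ q : ℚ, 0 ≤ (q : ℝ) → ENNReal.ofReal q < L → x ∈ uIcc 0 (q : ℝ) →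
      HasDerivAt (fun x => ∫ t in (0:ℝ)..x, f t) (f x) x := by
    refine ae_all_iff.2 fun q => ?_
    by_cases hq : 0 ≤ (q : ℝ) ∧ ENNReal.ofReal q < L
    · have hint := intervalIntegrable_zero_of_integrableOn_Ioc hf hq.1 hq.2
      filter_upwards [hint.ae_hasDerivAt_integral] with x hx _ _ hxq using hx hxq 0 left_mem_uIcc
    · exact Eventually.of_forall fun x h0 hL => absurd ⟨h0, hL⟩ hq
  filter_upwards [hrat] with x hx hx0 hxL
  obtain ⟨q, hq0, hxq, hqL⟩ := ENNReal.lt_iff_exists_rat_btwn.1 hxL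
  have hq0' : (0 : ℝ) ≤ q := by exact_mod_cast hq0
  have hxq' : x ∈ uIcc 0 (q : ℝ) := by
    rw [uIcc_of_le hq0']
    exact ⟨hx0, (ENNReal.ofReal_lt_ofReal_iff'.1 hxq).1.le⟩
  exact (hasDerivAt_id x).add (hx q hq0' hqL hxq')

end Primitive

theorem ae_deriv_genInv_mul_le_one {L : ℝ≥0∞} {w : ℝ → ℝ} {υ : Measure ℝ} {σ : ℝ → ℝ}
    (hw : ∀ x : ℝ, 0 ≤ x → ENNReal.ofReal x < L →
      IntegrableOn (fun t => w t ^ 2) (Set.Ioc 0 x) volume)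
    (hυ : ∀ x : ℝ, 0 ≤ x → ENNReal.ofReal x < L → υ (Set.Ico 0 x) < ⊤)
    (hσ : ∀ x : ℝ, σ x = x + (∫ t in (0:ℝ)..x, w t ^ 2) + (υ (Set.Ico 0 x)).toReal) :
    ∀ᵐ s, 0 ≤ deriv (genInv L σ) s ∧ deriv (genInv L σ) s * (1 + w (genInv L σ s) ^ 2) ≤ 1 := by
  set G := fun x : ℝ => x + ∫ t in (0:ℝ)..x, w t ^ 2
  have hσG : ∀ x y, 0 ≤ x → x ≤ y → ENNReal.ofReal y < L → G y - G x ≤ σ y - σ x := by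
    intro x y hx hxy hyL
    have := ENNReal.toReal_mono (hυ y (hx.trans hxy) hyL).ne
      (measure_mono (Ico_subset_Ico_right hxy) : υ (Ico 0 x) ≤ υ (Ico 0 y))
    simp only [G, hσ]
    linarith
  have hσ_ge : ∀ x, 0 ≤ x → x ≤ σ x := fun x hx => by
    rw [hσ]
    linarith [intervalIntegral.integral_nonneg (μ := volume) hx fun t _ => sq_nonneg (w t),
      ENNReal.toReal_nonneg (a := υ (Ico 0 x))]
  have hN : volume {x | 0 ≤ x ∧ ENNReal.ofReal x < L ∧ ¬HasDerivAt G (1 + w x ^ 2) x} = 0 :=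
    measure_eq_zero_iff_ae_notMem.2 <| by
      filter_upwards [ae_hasDerivAt_add_intervalIntegral hw] with x hx ⟨h0, hL, hnd⟩
      exact hnd (hx h0 hL)
  filter_upwards [(genInv_mono hσ_ge).ae_deriv_pos_imp_notMem hN] with s hs
  refine ⟨(genInv_mono hσ_ge).deriv_nonneg, ?_⟩
  rcases (genInv_mono hσ_ge).deriv_nonneg.eq_or_lt with h0 | hd
  · rw [← h0, zero_mul]
    exact zero_le_one
  refine deriv_genInv_mul_le_one hσ_ge (add_intervalIntegral_mono hw fun t => sq_nonneg (w t))
    hσG (continuousOn_add_intervalIntegral hw) hd ?_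
  by_contra hnd
  exact hs hd ⟨genInv_nonneg s, ofReal_genInv_lt hσ_ge hd, hnd⟩

theorem posSemidef_of_mul_one_add_sq_le {d a : ℝ} (hd : 0 ≤ d) (h : d * (1 + a ^ 2) ≤ 1) :
    (!![1 - d, d * a; d * a, d] : Matrix (Fin 2) (Fin 2) ℝ).PosSemidef := by
  refine PosSemidef.of_dotProduct_mulVec_nonneg ?_ fun x => ?_
  · ext i j
    fin_cases i <;> fin_cases j <;> simp
  · simp only [dotProduct, mulVec, Fin.sum_univ_two, star_trivial, of_apply, cons_val',
      cons_val_zero, cons_val_one, empty_val', cons_val_fin_one]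
    nlinarith [mul_nonneg hd (sq_nonneg (a * x 0 + x 1)),
      mul_nonneg (by nlinarith : 0 ≤ 1 - d * (1 + a ^ 2)) (sq_nonneg (x 0))]

theorem stmt_9_general (L : ℝ≥0∞) (w : ℝ → ℝ) (υ : Measure ℝ)
    (hw : ∀ x : ℝ, 0 ≤ x → ENNReal.ofReal x < L →
      IntegrableOn (fun t => w t ^ 2) (Set.Ioc 0 x) volume)
    (hυ : ∀ x : ℝ, 0 ≤ x → ENNReal.ofReal x < L → υ (Set.Ico 0 x) < ⊤)
    (σ ξ : ℝ → ℝ)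
    (hσ : ∀ x : ℝ, σ x = x + (∫ t in (0:ℝ)..x, w t ^ 2) + (υ (Set.Ico 0 x)).toReal)
    (hξ : ∀ s : ℝ, ξ s = sSup {x : ℝ | 0 ≤ x ∧ ENNReal.ofReal x < L ∧ σ x ≤ s})
    (H : ℝ → Matrix (Fin 2) (Fin 2) ℝ)
    (hH : ∀ s : ℝ, H s =
      !![1 - deriv ξ s, deriv ξ s * w (ξ s); deriv ξ s * w (ξ s), deriv ξ s]) :
    ∀ᵐ s ∂(volume.restrict (Set.Ici (0:ℝ))),
      (H s).IsSymm ∧ (H s).trace = 1 ∧ (H s).PosSemidef := by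
  obtain rfl : ξ = genInv L σ := funext hξ
  filter_upwards [ae_restrict_of_ae (ae_deriv_genInv_mul_le_one hw hυ hσ)] with s hs
  rw [hH]
  refine ⟨?_, by simp [trace_fin_two], posSemidef_of_mul_one_add_sq_le hs.1 hs.2⟩
  · ext i j
    fin_cases i <;> fin_cases j <;> simp

/-- The Hamiltonian `H(s) = !![1 - ξ'(s), ξ'(s) w(ξ(s)); ξ'(s) w(ξ(s)), ξ'(s)]` built from
the generalized inverse `ξ` of `σ(x) = x + ∫₀^x w² + υ([0,x))` is symmetric, trace normed
and positive semidefinite for almost every `s ∈ [0,∞)`. -/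
theorem stmt_9 (L : ℝ≥0∞) (hL : 0 < L) (w : ℝ → ℝ) (υ : Measure ℝ)
    (hw : ∀ x : ℝ, 0 ≤ x → ENNReal.ofReal x < L →
      IntegrableOn (fun t => w t ^ 2) (Set.Ioc 0 x) volume)
    (hυ : ∀ x : ℝ, 0 ≤ x → ENNReal.ofReal x < L → υ (Set.Ico 0 x) < ⊤)
    (σ ξ : ℝ → ℝ)
    (hσ : ∀ x : ℝ, σ x = x + (∫ t in (0:ℝ)..x, w t ^ 2) + (υ (Set.Ico 0 x)).toReal)
    (hξ : ∀ s : ℝ, ξ s = sSup {x : ℝ | 0 ≤ x ∧ ENNReal.ofReal x < L ∧ σ x ≤ s})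
    (H : ℝ → Matrix (Fin 2) (Fin 2) ℝ)
    (hH : ∀ s : ℝ, H s =
      !![1 - deriv ξ s, deriv ξ s * w (ξ s); deriv ξ s * w (ξ s), deriv ξ s]) :
    ∀ᵐ s ∂(volume.restrict (Set.Ici (0:ℝ))),
      (H s).IsSymm ∧ (H s).trace = 1 ∧ (H s).PosSemidef :=
  stmt_9_general L w υ hw hυ σ ξ hσ hξ H hH
end
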